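/- arXiv:1512.04485 — 2 statements merged into one kernel-verified Lean document; each statement's English description precedes it below -/
import Mathlib

section
/- Let λ, ν ∈ Λ with λ, ν, λ+ν, λ+2ν all nonzero. For a nonzero μ ∈ Λ set h_i(μ) := h_i + (t1+t2)/E(μ) in H. If m_{i,j} = 4, then h_i(λ) h_j(λ+ν) h_i(λ+2ν) h_j(ν) = h_j(ν) h_i(λ+2ν) h_j(λ+ν) h_i(λ). -/
/-!
Expanding both sides with the quadratic relations `h_k² = (t1 + t2) h_k - t1 t2`, the only
degree-four words are `h_i h_j h_i h_j` and `h_j h_i h_j h_i`, which agree by the braid relation;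
the remaining coefficients agree by a rational identity in `x = e^{-λ}` and `y = e^{-ν}`.

The braid relation in `H` needs `ijij` and `jiji` to be reduced words. Their right inversion
sequences have no repetitions, and a word with this property is reduced: by Tits' sign
representation, the parity of the number of occurrences of an element in the right inversion
sequence of a word only depends on the product of the word.
-/

open CoxeterSystem

/-- `E(λ) = e^{-λ} - 1`. -/
noncomputable def Eelt {Λ : Type*} [AddCommGroup Λ] {K : Type*} [Field K]
    (exp : Multiplicative Λ →* Kˣ) (lam : Λ) : K :=
  ((exp (Multiplicative.ofAdd (-lam)) : Kˣ) : K) - 1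

/-- `h_i(μ) := h_i + (t1+t2)/E(μ)`. -/
noncomputable def YBfactor {r : ℕ} {W : Type*} [Group W] {M : CoxeterMatrix (Fin r)}
    (cs : CoxeterSystem M W) {Λ : Type*} [AddCommGroup Λ] {K : Type*} [Field K]
    (exp : Multiplicative Λ →* Kˣ) (t1 t2 : K) {H : Type*} [Ring H] [Algebra K H]
    (h : W → H) (i : Fin r) (mu : Λ) : H :=
  h (cs.simple i) + algebraMap K H ((t1 + t2) / Eelt exp mu)

namespace CoxeterSystem

open List

variable {B W : Type*} [Group W] {M : CoxeterMatrix B} (cs : CoxeterSystem M W)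

local prefix:100 "s" => cs.simple
local prefix:100 "π" => cs.wordProd
local prefix:100 "ris " => cs.rightInvSeq

theorem prod_map_alternatingWord_two_mul {G : Type*} [Monoid G] (f : B → G) (i j : B) (m : ℕ) :
    ((alternatingWord i j (2 * m)).map f).prod = (f i * f j) ^ m := by
  induction m with
  | zero => simp [alternatingWord]
  | succ m ih =>
    rw [show 2 * (m + 1) = 2 * m + 1 + 1 by ring, alternatingWord_succ', alternatingWord_succ']
    simp [ih, pow_succ', mul_assoc]

theorem rightInvSeq_alternatingWord (i j : B) (k : ℕ) :
    ris (alternatingWord i j k) = ((range k).map fun n => s j * (s i * s j) ^ n).reverse := by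
  induction k generalizing i j with
  | zero => rfl
  | succ k ih =>
    rw [alternatingWord_succ, rightInvSeq_concat, ih, range_succ_eq_map]
    simp only [map_reverse, map_map, concat_eq_append, map_cons, reverse_cons, pow_zero, mul_one]
    congr 2
    refine map_congr_left fun n _ => ?_
    simp only [Function.comp_apply, MulAut.conj_apply, inv_simple, Nat.succ_eq_add_one]
    rw [← mul_pow_mul, mul_assoc, mul_assoc, ← pow_succ]

section SignRepresentation

variable [DecidableEq W]

/-- Tits' sign action of `s i`, with all of `W` standing in for the set of reflections. -/
def signPerm (i : B) : Equiv.Perm (W × ℤˣ) :=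
  Function.Involutive.toPerm (fun p => (s i * p.1 * s i, (if p.1 = s i then -1 else 1) * p.2)) <| by
    rintro ⟨x, ε⟩
    by_cases hx : x = s i <;> simp [hx, mul_assoc, mul_eq_one_iff_eq_inv]

theorem signPerm_apply (i : B) (x : W) (ε : ℤˣ) :
    cs.signPerm i (x, ε) = (s i * x * s i, (if x = s i then -1 else 1) * ε) := rfl

theorem prod_map_signPerm_apply (ω : List B) (x : W) (ε : ℤˣ) :
    (ω.map cs.signPerm).prod (x, ε) = (π ω * x * (π ω)⁻¹, (-1) ^ (ris ω).count x * ε) := by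
  induction ω generalizing x ε with
  | nil => simp
  | cons i ω ih =>
    have hconj : π ω * x * (π ω)⁻¹ = s i ↔ (π ω)⁻¹ * s i * π ω = x := by
      constructor <;> intro h <;> rw [← h] <;> group
    rw [map_cons, prod_cons, Equiv.Perm.mul_apply, ih, signPerm_apply, rightInvSeq, count_cons,
      wordProd_cons, mul_inv_rev, inv_simple]
    refine Prod.ext (by simp only [mul_assoc]) ?_
    by_cases hx : (π ω)⁻¹ * s i * π ω = x
    · simp [hconj.mpr hx, hx, pow_succ]
    · simp [hconj, hx]

theorem even_count_rightInvSeq_alternatingWord {i j : B} {m : ℕ} (h : (s i * s j) ^ m = 1)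
    (x : W) : Even ((ris (alternatingWord i j (2 * m))).count x) := by
  have hperiodic : ((fun n => s j * (s i * s j) ^ n) ∘ fun n => m + n) =
      fun n => s j * (s i * s j) ^ n := by
    funext n
    simp [pow_add, h]
  rw [rightInvSeq_alternatingWord, count_reverse, two_mul, range_add, map_append, count_append,
    map_map, hperiodic]
  exact Even.add_self _

theorem isLiftable_signPerm : M.IsLiftable cs.signPerm := fun i j => by
  ext ⟨x, ε⟩ : 1
  have hword : π (alternatingWord i j (2 * M i j)) = 1 :=
    (prod_map_alternatingWord_two_mul cs.simple i j _).trans (cs.simple_mul_simple_pow i j)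
  rw [← prod_map_alternatingWord_two_mul, prod_map_signPerm_apply, hword,
    (cs.even_count_rightInvSeq_alternatingWord (cs.simple_mul_simple_pow i j) x).neg_one_pow]
  simp

def signRep : W →* Equiv.Perm (W × ℤˣ) :=
  cs.lift ⟨cs.signPerm, cs.isLiftable_signPerm⟩

theorem signRep_wordProd (ω : List B) : cs.signRep (π ω) = (ω.map cs.signPerm).prod := by
  rw [wordProd, map_list_prod, map_map]
  congr 1
  exact map_congr_left fun i _ => cs.lift_apply_simple cs.isLiftable_signPerm i

theorem neg_one_pow_count_rightInvSeq_eq {ω ω' : List B} (h : π ω = π ω') (x : W) :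
    (-1 : ℤˣ) ^ (ris ω).count x = (-1) ^ (ris ω').count x := by
  have := congrArg (fun g : Equiv.Perm (W × ℤˣ) => (g (x, 1)).2) (congrArg cs.signRep h)
  simpa [signRep_wordProd, prod_map_signPerm_apply] using this

end SignRepresentation

theorem isReduced_of_nodup_rightInvSeq {ω : List B} (h : (ris ω).Nodup) : cs.IsReduced ω := by
  classical
  obtain ⟨ω', hω', hprod⟩ := cs.exists_isReduced (π ω)
  have hsub : ris ω ⊆ ris ω' := fun x hx => by
    have hodd := cs.neg_one_pow_count_rightInvSeq_eq hprod x
    rw [count_eq_one_of_mem h hx, pow_one] at hodd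
    by_contra hx'
    rw [count_eq_zero_of_not_mem hx', pow_zero] at hodd
    exact absurd hodd (by decide)
  refine le_antisymm (cs.length_wordProd_le ω) ?_
  calc ω.length = (ris ω).length := (length_rightInvSeq cs ω).symm
    _ ≤ (ris ω').length := (h.subperm hsub).length_le
    _ = cs.length (π ω) := by rw [length_rightInvSeq, hprod, hω'.eq]

theorem isReduced_alternatingWord {i j : B} {k : ℕ} (hk : k ≤ orderOf (s i * s j)) :
    cs.IsReduced (alternatingWord i j k) := by
  refine cs.isReduced_of_nodup_rightInvSeq ?_
  rw [rightInvSeq_alternatingWord, nodup_reverse]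
  refine (nodup_range).map_on fun a ha b hb hab => ?_
  exact pow_injOn_Iio_orderOf (Set.mem_Iio.mpr (by simp at ha; omega))
    (Set.mem_Iio.mpr (by simp at hb; omega)) (mul_left_cancel hab)

theorem wordProd_alternatingWord_eq_swap {i j : B} {m : ℕ} (h : (s i * s j) ^ m = 1) :
    π (alternatingWord i j m) = π (alternatingWord j i m) := by
  have hswap : s j * s i = (s i * s j)⁻¹ := by simp
  rw [prod_alternatingWord_eq_mul_pow, prod_alternatingWord_eq_mul_pow, hswap, inv_pow]
  rcases Nat.even_or_odd' m with ⟨p, rfl | rfl⟩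
  · have hp : (s i * s j) ^ p * (s i * s j) ^ p = 1 := by rw [← pow_add, ← two_mul, h]
    rw [if_pos (even_two_mul p), if_pos (even_two_mul p), Nat.mul_div_cancel_left p two_pos,
      inv_eq_of_mul_eq_one_right hp]
  · have hp : ((s i * s j) ^ p)⁻¹ = s i * s j * (s i * s j) ^ p := by
      rw [inv_eq_iff_mul_eq_one, ← pow_succ', ← pow_add, ← h]
      ring_nf
    have hodd : ¬Even (2 * p + 1) := by simp [parity_simps]
    rw [if_neg hodd, if_neg hodd, show (2 * p + 1) / 2 = p by omega, hp, ← mul_assoc,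
      ← mul_assoc, simple_mul_simple_self, one_mul]

section LengthMultiplicative

variable {H : Type*} [Monoid H] {h : W → H} (hone : h 1 = 1)
  (hmul : ∀ u v : W, cs.length (u * v) = cs.length u + cs.length v → h (u * v) = h u * h v)
include hone hmul

theorem apply_wordProd_of_isReduced {ω : List B} (hω : cs.IsReduced ω) :
    h (π ω) = (ω.map (h ∘ cs.simple)).prod := by
  induction ω with
  | nil => simpa using hone
  | cons i ω ih =>
    have hω' : cs.IsReduced ω := hω.drop 1
    have hlen : cs.length (s i * π ω) = cs.length (s i) + cs.length (π ω) := by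
      rw [← wordProd_cons, hω.eq, hω'.eq, length_simple, length_cons, add_comm]
    rw [wordProd_cons, hmul _ _ hlen, ih hω', map_cons, prod_cons, Function.comp_apply]

theorem prod_map_alternatingWord_eq_swap {i j : B} {m : ℕ} (hm : orderOf (s i * s j) = m) :
    ((alternatingWord i j m).map (h ∘ cs.simple)).prod =
      ((alternatingWord j i m).map (h ∘ cs.simple)).prod := by
  have hm' : orderOf (s j * s i) = m := by
    rw [← hm, ← orderOf_inv, mul_inv_rev, inv_simple, inv_simple]
  rw [← apply_wordProd_of_isReduced cs hone hmul (cs.isReduced_alternatingWord hm.ge),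
    ← apply_wordProd_of_isReduced cs hone hmul (cs.isReduced_alternatingWord hm'.ge),
    cs.wordProd_alternatingWord_eq_swap (hm ▸ pow_orderOf_eq_one _)]

end LengthMultiplicative

end CoxeterSystem

theorem yangBaxter_four_of_braid {K H : Type*} [CommRing K] [Ring H] [Algebra K H] {a b : H}
    {t1 t2 c1 c2 c3 c4 : K}
    (ha : (a - algebraMap K H t1) * (a - algebraMap K H t2) = 0)
    (hb : (b - algebraMap K H t1) * (b - algebraMap K H t2) = 0)
    (hab : a * b * a * b = b * a * b * a)
    (hc : (t1 + t2) * c2 + (t1 + t2) * c3 + c1 * c2 + c2 * c3 + c3 * c4 = c1 * c4) :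
    (a + algebraMap K H c1) * (b + algebraMap K H c2) * (a + algebraMap K H c3) *
        (b + algebraMap K H c4) =
      (b + algebraMap K H c4) * (a + algebraMap K H c3) * (b + algebraMap K H c2) *
        (a + algebraMap K H c1) := by
  have quad : ∀ x : H, (x - algebraMap K H t1) * (x - algebraMap K H t2) = 0 →
      x * x = (t1 + t2) • x - (t1 * t2) • 1 := fun x hx => by
    rw [← sub_eq_zero, ← hx]
    simp only [Algebra.algebraMap_eq_smul_one, sub_mul, mul_sub, smul_mul_assoc, mul_smul_comm,
      one_mul, mul_one]
    module
  have quad_left : ∀ x : H, (x - algebraMap K H t1) * (x - algebraMap K H t2) = 0 →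
      ∀ z : H, x * (x * z) = (t1 + t2) • (x * z) - (t1 * t2) • z := fun x hx z => by
    rw [← mul_assoc, quad x hx, sub_mul, smul_mul_assoc, smul_mul_assoc, one_mul]
  simp only [mul_assoc] at hab
  simp only [Algebra.algebraMap_eq_smul_one, add_mul, mul_add, smul_mul_assoc, mul_smul_comm,
    one_mul, mul_one, mul_assoc, hab]
  simp only [quad_left a ha, quad_left b hb, quad a ha, quad b hb, mul_sub, mul_smul_comm, mul_one,
    smul_sub, smul_smul]
  match_scalars
  all_goals try ring1
  all_goals try linear_combination hc
  all_goals linear_combination -hc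

section Eelt

variable {Λ K : Type*} [AddCommGroup Λ] [Field K]

theorem Eelt_ne_zero {exp : Multiplicative Λ →* Kˣ} (hexp : Function.Injective exp) {μ : Λ}
    (hμ : μ ≠ 0) : Eelt exp μ ≠ 0 := by
  rw [Eelt, sub_ne_zero, Ne, Units.val_eq_one, ← map_one exp, hexp.eq_iff]
  simpa using hμ

theorem Eelt_add_nsmul (exp : Multiplicative Λ →* Kˣ) (μ ν : Λ) (n : ℕ) :
    Eelt exp (μ + n • ν) = (Eelt exp μ + 1) * (Eelt exp ν + 1) ^ n - 1 := by
  simp only [Eelt, sub_add_cancel, neg_add, ← smul_neg, ofAdd_add, ofAdd_nsmul, map_mul, map_pow,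
    Units.val_mul, Units.val_pow_eq_pow_val]

theorem yangBaxter_scalar_identity (S : K) {x y : K} (hx : x - 1 ≠ 0) (hy : y - 1 ≠ 0)
    (hxy : x * y - 1 ≠ 0) (hxy2 : x * y ^ 2 - 1 ≠ 0) :
    S * (S / (x * y - 1)) + S * (S / (x * y ^ 2 - 1)) + S / (x - 1) * (S / (x * y - 1)) +
        S / (x * y - 1) * (S / (x * y ^ 2 - 1)) + S / (x * y ^ 2 - 1) * (S / (y - 1)) =
      S / (x - 1) * (S / (y - 1)) := by
  field_simp
  ring

theorem Eelt_yangBaxter_identity {exp : Multiplicative Λ →* Kˣ} (hexp : Function.Injective exp)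
    (S : K) {μ ν : Λ} (hμ : μ ≠ 0) (hν : ν ≠ 0) (hμν : μ + ν ≠ 0) (hμ2ν : μ + 2 • ν ≠ 0) :
    S * (S / Eelt exp (μ + ν)) + S * (S / Eelt exp (μ + 2 • ν)) +
        S / Eelt exp μ * (S / Eelt exp (μ + ν)) +
        S / Eelt exp (μ + ν) * (S / Eelt exp (μ + 2 • ν)) +
        S / Eelt exp (μ + 2 • ν) * (S / Eelt exp ν) =
      S / Eelt exp μ * (S / Eelt exp ν) := by
  have hE₁ : Eelt exp (μ + ν) = (Eelt exp μ + 1) * (Eelt exp ν + 1) - 1 := by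
    simpa using Eelt_add_nsmul exp μ ν 1
  have hE₂ := Eelt_add_nsmul exp μ ν 2
  have := yangBaxter_scalar_identity S (x := Eelt exp μ + 1) (y := Eelt exp ν + 1)
  simp only [add_sub_cancel_right, ← hE₁, ← hE₂] at this
  exact this (Eelt_ne_zero hexp hμ) (Eelt_ne_zero hexp hν) (Eelt_ne_zero hexp hμν)
    (Eelt_ne_zero hexp hμ2ν)

end Eelt

theorem yang_baxter_relation_m_eq_four_general
    {r : ℕ} {W : Type*} [Group W] {M : CoxeterMatrix (Fin r)} (cs : CoxeterSystem M W)
    {Λ : Type*} [AddCommGroup Λ]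
    {K : Type*} [Field K] (exp : Multiplicative Λ →* Kˣ)
    (hexp_inj : Function.Injective exp) (t1 t2 : K)
    {H : Type*} [Ring H] [Algebra K H]
    (h : W → H)
    (hone : h 1 = 1)
    (hmul : ∀ u v : W, cs.length (u * v) = cs.length u + cs.length v →
      h (u * v) = h u * h v)
    (hquad : ∀ i : Fin r,
      (h (cs.simple i) - algebraMap K H t1) * (h (cs.simple i) - algebraMap K H t2) = 0)
    (i j : Fin r) (hm : orderOf (cs.simple i * cs.simple j) = 4)
    (lam nu : Λ) (hlam : lam ≠ 0) (hnu : nu ≠ 0) (hln : lam + nu ≠ 0)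
    (hl2n : lam + 2 • nu ≠ 0) :
    YBfactor cs exp t1 t2 h i lam * YBfactor cs exp t1 t2 h j (lam + nu) *
        YBfactor cs exp t1 t2 h i (lam + 2 • nu) * YBfactor cs exp t1 t2 h j nu =
      YBfactor cs exp t1 t2 h j nu * YBfactor cs exp t1 t2 h i (lam + 2 • nu) *
        YBfactor cs exp t1 t2 h j (lam + nu) * YBfactor cs exp t1 t2 h i lam := by
  have hbraid : h (cs.simple i) * h (cs.simple j) * h (cs.simple i) * h (cs.simple j) =
      h (cs.simple j) * h (cs.simple i) * h (cs.simple j) * h (cs.simple i) := by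
    simpa [alternatingWord, mul_assoc] using cs.prod_map_alternatingWord_eq_swap hone hmul hm
  exact yangBaxter_four_of_braid (hquad i) (hquad j) hbraid
    (Eelt_yangBaxter_identity hexp_inj (t1 + t2) hlam hnu hln hl2n)

/-- the Yang–Baxter relation for `m_{i,j} = 4`:
`h_i(λ) h_j(λ+ν) h_i(λ+2ν) h_j(ν) = h_j(ν) h_i(λ+2ν) h_j(λ+ν) h_i(λ)`. -/
theorem yang_baxter_relation_m_eq_four
    {r : ℕ} {W : Type*} [Group W] {M : CoxeterMatrix (Fin r)} (cs : CoxeterSystem M W)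
    {Λ : Type*} [AddCommGroup Λ] (α : Fin r → Λ)
    {K : Type*} [Field K] (exp : Multiplicative Λ →* Kˣ)
    (hexp_inj : Function.Injective exp) (t1 t2 : K)
    {H : Type*} [Ring H] [Algebra K H]
    (h : W → H) (hb : Module.Basis W K H)
    (hbasis : ∀ w : W, hb w = h w)
    (hone : h 1 = 1)
    (hmul : ∀ u v : W, cs.length (u * v) = cs.length u + cs.length v →
      h (u * v) = h u * h v)
    (hquad : ∀ i : Fin r,
      (h (cs.simple i) - algebraMap K H t1) * (h (cs.simple i) - algebraMap K H t2) = 0)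
    (i j : Fin r) (hm : orderOf (cs.simple i * cs.simple j) = 4)
    (lam nu : Λ) (hlam : lam ≠ 0) (hnu : nu ≠ 0) (hln : lam + nu ≠ 0)
    (hl2n : lam + 2 • nu ≠ 0) :
    YBfactor cs exp t1 t2 h i lam * YBfactor cs exp t1 t2 h j (lam + nu) *
        YBfactor cs exp t1 t2 h i (lam + 2 • nu) * YBfactor cs exp t1 t2 h j nu =
      YBfactor cs exp t1 t2 h j nu * YBfactor cs exp t1 t2 h i (lam + 2 • nu) *
        YBfactor cs exp t1 t2 h j (lam + nu) * YBfactor cs exp t1 t2 h i lam :=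
  yang_baxter_relation_m_eq_four_general cs exp hexp_inj t1 t2 h hone hmul hquad i j hm lam nu hlam
    hnu hln hl2n
end

section
/- Let w, v ∈ W and let s = s_i be a simple reflection with sv > v in the Bruhat order. Then p(w, sv) = ((t1+t2)/E(α_s))·s[p(w,v)] − t1 t2 · s[p(sw,v)] if sw > w, and p(w, sv) = (t1+t2)(1/E(α_s) + 1)·s[p(w,v)] + s[p(sw,v)] if sw < w, where s[·] denotes the action of s on coefficients in Q_{t1,t2}(Λ) and α_s = α_i is the simple root of s. -/
open CoxeterSystem

/-- The Bruhat order on `W`: `u ≤ v` iff there is a chain from `u` to `v` each of whose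
steps multiplies on the right by a reflection while increasing the length. -/
def bruhatLE {r : ℕ} {W : Type*} [Group W] {M : CoxeterMatrix (Fin r)}
    (cs : CoxeterSystem M W) (u v : W) : Prop :=
  Relation.ReflTransGen
    (fun a b => (∃ t, cs.IsReflection t ∧ b = a * t) ∧ cs.length a < cs.length b) u v

/-- The strict Bruhat order on `W`. -/
def bruhatLT {r : ℕ} {W : Type*} [Group W] {M : CoxeterMatrix (Fin r)}
    (cs : CoxeterSystem M W) (u v : W) : Prop :=
  Relation.TransGen
    (fun a b => (∃ t, cs.IsReflection t ∧ b = a * t) ∧ cs.length a < cs.length b) u v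

/-- `p(w,v)`: the coefficient of `h_w` in the expansion `Y_v = ∑_w p(w,v) h_w` of the
Yang–Baxter basis element `Y_v` in the standard basis (`hb w = h w`). -/
noncomputable def pCoeff {W : Type*} {K : Type*} [Field K] {H : Type*} [Ring H] [Algebra K H]
    (hb : Module.Basis W K H) (Y : W → H) (w v : W) : K :=
  hb.repr (Y v) w

/-!
Let `s = s_i` act on `H` coefficientwise in the basis `(h_w)`. As `s` fixes `t1` and `t2`, this
action commutes with right multiplication by every `h_j`; since moreover `s (w x) = (s w) x` on
scalars, the defining right recursion of `Y` gives, by induction on `ℓ(v)`,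
`Y_{sv} = (h_s + (t1 + t2) / E(α_s)) · s[Y_v]` whenever `sv > v`. The recurrence is the
coefficient of `h_w` in this identity, read off from `h_s h_u = h_{su}` for `su > u` and
`h_s h_u = (t1 + t2) h_u - t1 t2 h_{su}` for `su < u`.
-/

namespace Module.Basis

section Semiring

variable {ι R M : Type*} [CommSemiring R] [AddCommMonoid M] [Module R M]
  (b : Basis ι R M) (σ : R →+* R)

/-- The paper's coefficientwise action `x ↦ s[x]`, for `σ` the action of `s` on scalars. -/
noncomputable def mapCoords : M →ₛₗ[σ] M :=
  b.repr.symm.toLinearMap ∘ₛₗ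
    (Finsupp.mapRange.linearMap σ.toSemilinearMap ∘ₛₗ b.repr.toLinearMap)

@[simp]
theorem repr_mapCoords (x : M) (i : ι) : b.repr (b.mapCoords σ x) i = σ (b.repr x i) := by
  simp [mapCoords]

@[simp]
theorem mapCoords_self (i : ι) : b.mapCoords σ (b i) = b i := by
  simp [mapCoords]

end Semiring

variable {ι R A : Type*} [CommSemiring R] [Semiring A] [Algebra R A]
  (b : Basis ι R A) (σ : R →+* R)

theorem mapCoords_mul_of_forall_basis_mul {y : A} (hy : ∀ i, b.mapCoords σ (b i * y) = b i * y)
    (x : A) : b.mapCoords σ (x * y) = b.mapCoords σ x * y :=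
  LinearMap.congr_fun (b.ext (f₁ := b.mapCoords σ ∘ₛₗ LinearMap.mulRight R y)
    (f₂ := LinearMap.mulRight R y ∘ₛₗ b.mapCoords σ) fun i => by simpa using hy i) x

theorem mapCoords_mul_algebraMap (x : A) (c : R) :
    b.mapCoords σ (x * algebraMap R A c) = b.mapCoords σ x * algebraMap R A (σ c) := by
  rw [← Algebra.commutes, ← Algebra.smul_def, map_smulₛₗ, Algebra.smul_def, Algebra.commutes]

end Module.Basis

theorem mul_self_eq_of_quadratic {R A : Type*} [CommRing R] [Ring A] [Algebra R A] {x : A}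
    {t1 t2 : R} (hx : (x - algebraMap R A t1) * (x - algebraMap R A t2) = 0) :
    x * x = (t1 + t2) • x - (t1 * t2) • 1 := by
  rw [sub_mul, mul_sub, mul_sub, ← Algebra.commutes, ← Algebra.smul_def, ← Algebra.smul_def,
    ← Algebra.smul_def, Algebra.algebraMap_eq_smul_one, smul_smul] at hx
  linear_combination (norm := module) hx

section Hecke

open CoxeterSystem Module

variable {B W K H : Type*} [Group W] {M : CoxeterMatrix B} {cs : CoxeterSystem M W}
  [CommRing K] [Ring H] [Algebra K H] {t1 t2 : K} {hb : Basis W K H}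
  (hmul : ∀ u v, cs.length (u * v) = cs.length u + cs.length v → hb (u * v) = hb u * hb v)
  (hquad : ∀ i, (hb (cs.simple i) - algebraMap K H t1) * (hb (cs.simple i) - algebraMap K H t2) = 0)
include hmul

theorem simple_mul_basis_of_not_isLeftDescent {u : W} {i : B} (hu : ¬cs.IsLeftDescent u i) :
    hb (cs.simple i) * hb u = hb (cs.simple i * u) :=
  (hmul _ _ (by rw [cs.not_isLeftDescent_iff.mp hu, cs.length_simple, add_comm])).symm

theorem basis_mul_simple_of_not_isRightDescent {u : W} {i : B} (hu : ¬cs.IsRightDescent u i) :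
    hb u * hb (cs.simple i) = hb (u * cs.simple i) :=
  (hmul _ _ (by rw [cs.not_isRightDescent_iff.mp hu, cs.length_simple])).symm

include hquad

theorem simple_mul_basis_of_isLeftDescent {u : W} {i : B} (hu : cs.IsLeftDescent u i) :
    hb (cs.simple i) * hb u = (t1 + t2) • hb u - (t1 * t2) • hb (cs.simple i * u) := by
  have hsu : ¬cs.IsLeftDescent (cs.simple i * u) i := by
    rwa [← cs.isLeftDescent_iff_not_isLeftDescent_mul]
  have hfac := simple_mul_basis_of_not_isLeftDescent hmul hsu
  rw [simple_mul_simple_cancel_left] at hfac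
  rw [← hfac, ← mul_assoc, mul_self_eq_of_quadratic (hquad i), sub_mul, smul_mul_assoc,
    smul_mul_assoc, one_mul]

theorem basis_mul_simple_of_isRightDescent {u : W} {i : B} (hu : cs.IsRightDescent u i) :
    hb u * hb (cs.simple i) = (t1 + t2) • hb u - (t1 * t2) • hb (u * cs.simple i) := by
  have hus : ¬cs.IsRightDescent (u * cs.simple i) i := by
    rwa [← cs.isRightDescent_iff_not_isRightDescent_mul]
  have hfac := basis_mul_simple_of_not_isRightDescent hmul hus
  rw [simple_mul_simple_cancel_right] at hfac
  rw [← hfac, mul_assoc, mul_self_eq_of_quadratic (hquad i), mul_sub, mul_smul_comm,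
    mul_smul_comm, mul_one]

theorem repr_simple_mul_of_not_isLeftDescent {w : W} {i : B} (hw : ¬cs.IsLeftDescent w i)
    (x : H) : hb.repr (hb (cs.simple i) * x) w = -(t1 * t2) * hb.repr x (cs.simple i * w) := by
  classical
  refine LinearMap.congr_fun (hb.ext (f₁ := hb.coord w ∘ₗ LinearMap.mulLeft K (hb (cs.simple i)))
    (f₂ := (-(t1 * t2)) • hb.coord (cs.simple i * w)) fun u => ?_) x
  simp only [LinearMap.comp_apply, LinearMap.mulLeft_apply, LinearMap.smul_apply,
    Basis.coord_apply, Basis.repr_self_apply, smul_eq_mul]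
  by_cases hu : u = cs.simple i * w
  · subst hu
    have hsw : cs.IsLeftDescent (cs.simple i * w) i := by
      rwa [cs.isLeftDescent_iff_not_isLeftDescent_mul, simple_mul_simple_cancel_left]
    have hne : cs.simple i * w ≠ w := fun h => hw (h ▸ hsw)
    simp [simple_mul_basis_of_isLeftDescent hmul hquad hsw, hne]
  have hsu : cs.simple i * u ≠ w := fun h => hu (by rw [← h, simple_mul_simple_cancel_left])
  by_cases hdesc : cs.IsLeftDescent u i
  · have hne : u ≠ w := fun h => hw (h ▸ hdesc)
    simp [simple_mul_basis_of_isLeftDescent hmul hquad hdesc, hne, hsu, hu]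
  · simp [simple_mul_basis_of_not_isLeftDescent hmul hdesc, hsu, hu]

theorem repr_simple_mul_of_isLeftDescent {w : W} {i : B} (hw : cs.IsLeftDescent w i) (x : H) :
    hb.repr (hb (cs.simple i) * x) w = hb.repr x (cs.simple i * w) + (t1 + t2) * hb.repr x w := by
  classical
  refine LinearMap.congr_fun (hb.ext (f₁ := hb.coord w ∘ₗ LinearMap.mulLeft K (hb (cs.simple i)))
    (f₂ := hb.coord (cs.simple i * w) + (t1 + t2) • hb.coord w) fun u => ?_) x
  simp only [LinearMap.comp_apply, LinearMap.mulLeft_apply, LinearMap.add_apply,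
    LinearMap.smul_apply, Basis.coord_apply, Basis.repr_self_apply, smul_eq_mul]
  have hne : cs.simple i * w ≠ w := fun h => (cs.isLeftDescent_iff_not_isLeftDescent_mul.mp hw)
    (h.symm ▸ hw)
  by_cases hu : u = cs.simple i * w
  · subst hu
    have hsw : ¬cs.IsLeftDescent (cs.simple i * w) i := by
      rwa [← cs.isLeftDescent_iff_not_isLeftDescent_mul]
    simp [simple_mul_basis_of_not_isLeftDescent hmul hsw, hne]
  by_cases huw : u = w
  · subst huw
    simp [simple_mul_basis_of_isLeftDescent hmul hquad hw, hne.symm]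
  have hsu : cs.simple i * u ≠ w := fun h => hu (by rw [← h, simple_mul_simple_cancel_left])
  by_cases hdesc : cs.IsLeftDescent u i
  · simp [simple_mul_basis_of_isLeftDescent hmul hquad hdesc, huw, hsu, hu]
  · simp [simple_mul_basis_of_not_isLeftDescent hmul hdesc, hsu, hu, huw]

theorem mapCoords_mul_simple {σ : K →+* K} (hσ1 : σ t1 = t1) (hσ2 : σ t2 = t2) (x : H) (i : B) :
    hb.mapCoords σ (x * hb (cs.simple i)) = hb.mapCoords σ x * hb (cs.simple i) := by
  refine hb.mapCoords_mul_of_forall_basis_mul σ (fun u => ?_) x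
  by_cases hu : cs.IsRightDescent u i
  · rw [basis_mul_simple_of_isRightDescent hmul hquad hu]
    simp [hσ1, hσ2]
  · rw [basis_mul_simple_of_not_isRightDescent hmul hu, Basis.mapCoords_self]

theorem yangBaxter_simple_mul
    (hone : hb 1 = 1) {wK : W →* RingAut K} (hwt1 : ∀ w, wK w t1 = t1) (hwt2 : ∀ w, wK w t2 = t2)
    {a : B → K} {Y : W → H} (hY1 : Y 1 = 1)
    (hYrec : ∀ w j, ¬cs.IsRightDescent w j →
      Y (w * cs.simple j) = Y w * (hb (cs.simple j) + algebraMap K H (wK w (a j))))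
    {v : W} {i : B} (hv : ¬cs.IsLeftDescent v i) :
    Y (cs.simple i * v) = (hb (cs.simple i) + algebraMap K H (a i)) *
      hb.mapCoords (wK (cs.simple i) : K →+* K) (Y v) := by
  induction hn : cs.length v using Nat.strong_induction_on generalizing v with
  | _ n ih =>
    obtain rfl | hv1 := eq_or_ne v 1
    · have hYs := hYrec 1 i (by simp [IsRightDescent])
      rw [one_mul, hY1, one_mul, map_one, RingAut.one_apply] at hYs
      rw [mul_one, hYs, hY1, ← hone, Basis.mapCoords_self, hone, mul_one]
    obtain ⟨j, hj⟩ := cs.exists_rightDescent_of_ne_one hv1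
    obtain ⟨v, rfl⟩ : ∃ v', v = v' * cs.simple j := ⟨v * cs.simple j, by simp⟩
    rw [cs.isRightDescent_iff, simple_mul_simple_cancel_right] at hj
    rw [cs.not_isLeftDescent_iff] at hv
    have hlen_svj := cs.length_mul_le (cs.simple i * v) (cs.simple j)
    have hlen_sv := cs.length_mul_le (cs.simple i) v
    rw [cs.length_simple] at hlen_svj hlen_sv
    rw [← mul_assoc] at hv
    have hvi : ¬cs.IsLeftDescent v i := fun h => by unfold IsLeftDescent at h; omega
    have hsvj : ¬cs.IsRightDescent (cs.simple i * v) j := fun h => by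
      unfold IsRightDescent at h; omega
    have hvj : ¬cs.IsRightDescent v j := fun h => by unfold IsRightDescent at h; omega
    calc Y (cs.simple i * (v * cs.simple j))
        = Y (cs.simple i * v) *
            (hb (cs.simple j) + algebraMap K H (wK (cs.simple i * v) (a j))) := by
          rw [← mul_assoc, hYrec _ _ hsvj]
      _ = (hb (cs.simple i) + algebraMap K H (a i)) *
            hb.mapCoords (wK (cs.simple i) : K →+* K) (Y v) *
            (hb (cs.simple j) + algebraMap K H ((wK (cs.simple i) : K →+* K) (wK v (a j)))) := by
          rw [ih _ (by omega) hvi rfl, map_mul]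
          rfl
      _ = _ := by
          rw [hYrec _ _ hvj, mul_add (Y v), map_add,
            mapCoords_mul_simple hmul hquad (hwt1 _) (hwt2 _), Basis.mapCoords_mul_algebraMap,
            mul_assoc, mul_add]

end Hecke

theorem length_lt_of_bruhatLT {r : ℕ} {W : Type*} [Group W] {M : CoxeterMatrix (Fin r)}
    {cs : CoxeterSystem M W} {u v : W} (huv : bruhatLT cs u v) : cs.length u < cs.length v := by
  induction huv with
  | single hstep => exact hstep.2
  | tail _ hstep ih => exact ih.trans hstep.2

theorem pCoeff_left_recurrence_general
    {r : ℕ} {W : Type*} [Group W] {M : CoxeterMatrix (Fin r)}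
    (cs : CoxeterSystem M W)
    {Λ : Type*} [AddCommGroup Λ] (α : Fin r → Λ)
    {K : Type*} [Field K] (exp : Multiplicative Λ →* Kˣ)
    (t1 t2 : K) (wK : W →* RingAut K)
    (hwt1 : ∀ w : W, wK w t1 = t1) (hwt2 : ∀ w : W, wK w t2 = t2)
    {H : Type*} [Ring H] [Algebra K H]
    (h : W → H) (hb : Module.Basis W K H)
    (hbasis : ∀ w : W, hb w = h w)
    (hone : h 1 = 1)
    (hmul : ∀ u v : W, cs.length (u * v) = cs.length u + cs.length v →
      h (u * v) = h u * h v)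
    (hquad : ∀ i : Fin r,
      (h (cs.simple i) - algebraMap K H t1) * (h (cs.simple i) - algebraMap K H t2) = 0)
    (Y : W → H) (hY1 : Y 1 = 1)
    (hYrec : ∀ (w : W) (i : Fin r), cs.length (w * cs.simple i) = cs.length w + 1 →
      Y (w * cs.simple i)
        = Y w * (h (cs.simple i) + algebraMap K H ((t1 + t2) / wK w (Eelt exp (α i)))))
    (w v : W) (i : Fin r)
    (hsv : bruhatLT cs v (cs.simple i * v)) :
    (bruhatLT cs w (cs.simple i * w) →
      pCoeff hb Y w (cs.simple i * v)
        = (t1 + t2) / Eelt exp (α i) * wK (cs.simple i) (pCoeff hb Y w v)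
          - t1 * t2 * wK (cs.simple i) (pCoeff hb Y (cs.simple i * w) v)) ∧
    (bruhatLT cs (cs.simple i * w) w →
      pCoeff hb Y w (cs.simple i * v)
        = (t1 + t2) * (1 / Eelt exp (α i) + 1) * wK (cs.simple i) (pCoeff hb Y w v)
          + wK (cs.simple i) (pCoeff hb Y (cs.simple i * w) v)) := by
  obtain rfl : h = ⇑hb := funext fun w => (hbasis w).symm
  have hYrec' : ∀ w j, ¬cs.IsRightDescent w j → Y (w * cs.simple j) =
      Y w * (hb (cs.simple j) + algebraMap K H (wK w ((t1 + t2) / Eelt exp (α j)))) :=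
    fun w j hw => by
      rw [hYrec w j (cs.not_isRightDescent_iff.mp hw), map_div₀ (wK w), map_add (wK w), hwt1, hwt2]
  have hv : ¬cs.IsLeftDescent v i := (length_lt_of_bruhatLT hsv).not_gt
  have hYsv := yangBaxter_simple_mul hmul hquad hone hwt1 hwt2 hY1 hYrec' hv
  refine ⟨fun hw => ?_, fun hw => ?_⟩ <;>
    simp only [pCoeff, hYsv, add_mul, map_add, Finsupp.add_apply, ← Algebra.smul_def, map_smul,
      Finsupp.smul_apply, smul_eq_mul, Module.Basis.repr_mapCoords, RingEquiv.coe_toRingHom]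
  · rw [repr_simple_mul_of_not_isLeftDescent hmul hquad (length_lt_of_bruhatLT hw).not_gt,
      Module.Basis.repr_mapCoords, RingEquiv.coe_toRingHom]
    ring
  · rw [repr_simple_mul_of_isLeftDescent hmul hquad (length_lt_of_bruhatLT hw),
      Module.Basis.repr_mapCoords, Module.Basis.repr_mapCoords, RingEquiv.coe_toRingHom]
    ring

/-- left recurrence for `p`: if `sv > v` then
`p(w,sv) = ((t1+t2)/E(α_s))·s[p(w,v)] − t1t2·s[p(sw,v)]` if `sw > w`, and
`p(w,sv) = (t1+t2)(1/E(α_s) + 1)·s[p(w,v)] + s[p(sw,v)]` if `sw < w`. -/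
theorem pCoeff_left_recurrence
    {r : ℕ} {W : Type*} [Group W] [Fintype W] {M : CoxeterMatrix (Fin r)}
    (cs : CoxeterSystem M W)
    {Λ : Type*} [AddCommGroup Λ] (wΛ : W →* Multiplicative (AddAut Λ)) (α : Fin r → Λ)
    (coroot : Fin r → (Λ →+ ℤ))
    (hact : ∀ (i : Fin r) (lam : Λ), Multiplicative.toAdd (wΛ (cs.simple i)) lam = lam - (coroot i lam) • α i)
    (hαα : ∀ i : Fin r, coroot i (α i) = 2)
    (hindep : LinearIndependent ℤ α)
    (hcart : ∀ i j : Fin r, i ≠ j →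
      (M.M i j = 2 ∧ coroot i (α j) = 0 ∧ coroot j (α i) = 0) ∨
      (M.M i j = 3 ∧ coroot i (α j) = -1 ∧ coroot j (α i) = -1) ∨
      (M.M i j = 4 ∧ coroot i (α j) * coroot j (α i) = 2 ∧
        coroot i (α j) < 0 ∧ coroot j (α i) < 0) ∨
      (M.M i j = 6 ∧ coroot i (α j) * coroot j (α i) = 3 ∧
        coroot i (α j) < 0 ∧ coroot j (α i) < 0))
    {K : Type*} [Field K] (exp : Multiplicative Λ →* Kˣ)
    (hexp_inj : Function.Injective exp)
    (t1 t2 : K) (wK : W →* RingAut K)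
    (hwexp : ∀ (w : W) (lam : Λ),
      wK w ((exp (Multiplicative.ofAdd lam) : Kˣ) : K)
        = ((exp (Multiplicative.ofAdd (Multiplicative.toAdd (wΛ w) lam)) : Kˣ) : K))
    (hwt1 : ∀ w : W, wK w t1 = t1) (hwt2 : ∀ w : W, wK w t2 = t2)
    {H : Type*} [Ring H] [Algebra K H]
    (h : W → H) (hb : Module.Basis W K H)
    (hbasis : ∀ w : W, hb w = h w)
    (hone : h 1 = 1)
    (hmul : ∀ u v : W, cs.length (u * v) = cs.length u + cs.length v →
      h (u * v) = h u * h v)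
    (hquad : ∀ i : Fin r,
      (h (cs.simple i) - algebraMap K H t1) * (h (cs.simple i) - algebraMap K H t2) = 0)
    (Y : W → H) (hY1 : Y 1 = 1)
    (hYrec : ∀ (w : W) (i : Fin r), cs.length (w * cs.simple i) = cs.length w + 1 →
      Y (w * cs.simple i)
        = Y w * (h (cs.simple i) + algebraMap K H ((t1 + t2) / wK w (Eelt exp (α i)))))
    (w v : W) (i : Fin r)
    (hsv : bruhatLT cs v (cs.simple i * v)) :
    (bruhatLT cs w (cs.simple i * w) →
      pCoeff hb Y w (cs.simple i * v)
        = (t1 + t2) / Eelt exp (α i) * wK (cs.simple i) (pCoeff hb Y w v)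
          - t1 * t2 * wK (cs.simple i) (pCoeff hb Y (cs.simple i * w) v)) ∧
    (bruhatLT cs (cs.simple i * w) w →
      pCoeff hb Y w (cs.simple i * v)
        = (t1 + t2) * (1 / Eelt exp (α i) + 1) * wK (cs.simple i) (pCoeff hb Y w v)
          + wK (cs.simple i) (pCoeff hb Y (cs.simple i * w) v)) :=
  pCoeff_left_recurrence_general cs α exp t1 t2 wK hwt1 hwt2 h hb hbasis hone hmul hquad Y hY1 hYrec
    w v i hsv
end
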